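/- arXiv:2012.11736 — 2 statements merged into one kernel-verified Lean document; each statement's English description precedes it below -/
import Mathlib

section
/- Let f(t,z) = ln(1 + 1/t)/z. For all positive reals t, z, t⁰, z⁰, the tangent-plane lower bound holds: f(t,z) ≥ 2·f(t⁰,z⁰) + 1/(z⁰(t⁰+1)) − t/(z⁰·t⁰·(t⁰+1)) − (f(t⁰,z⁰)/z⁰)·z, with equality when (t,z) = (t⁰,z⁰). -/
/-!
Write `g t = log (1 + 1 / t)`, so `f (t, z) = g t / z`. By AM-GM,
`g t / z + g t⁰ * z / z⁰ ^ 2 ≥ 2 √(g t) √(g t⁰) / z⁰`, which reduces the bound to the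
tangent-line inequality for `√g` at `t⁰`, i.e. to the convexity of `√g` on `(0, ∞)`.
The derivative of `√g` is `-1 / (2 √φ)` with `φ t = (t (t + 1)) ^ 2 * g t`, and
`φ' t = t (t + 1) (2 (2t + 1) g t - 1) ≥ 0` because `g t ≥ 1 / (t + 1)`.
-/

open Real Set

theorem ConvexOn.add_deriv_mul_sub_le {S : Set ℝ} {f : ℝ → ℝ} {x y f' : ℝ}
    (hf : ConvexOn ℝ S f) (hx : x ∈ S) (hy : y ∈ S) (hf' : HasDerivAt f f' x) :
    f x + f' * (y - x) ≤ f y := by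
  rcases lt_trichotomy x y with hxy | rfl | hyx
  · have := hf.le_slope_of_hasDerivAt hx hy hxy hf'
    rw [slope_def_field, le_div_iff₀ (sub_pos.2 hxy)] at this
    linarith
  · simp
  · have := hf.slope_le_of_hasDerivAt hy hx hyx hf'
    rw [slope_def_field, div_le_iff₀ (sub_pos.2 hyx)] at this
    linarith

theorem MonotoneOn.convexOn_of_hasDerivAt {D : Set ℝ} (hD : Convex ℝ D) (hDo : IsOpen D)
    {f f' : ℝ → ℝ} (hf : ∀ x ∈ D, HasDerivAt f (f' x) x) (hf' : MonotoneOn f' D) :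
    ConvexOn ℝ D f := by
  refine MonotoneOn.convexOn_of_deriv hD (HasDerivAt.continuousOn hf) ?_ ?_ <;>
    rw [hDo.interior_eq]
  · exact fun x hx => (hf x hx).differentiableAt.differentiableWithinAt
  · exact hf'.congr fun x hx => ((hf x hx).deriv).symm

theorem monotoneOn_of_hasDerivAt_nonneg {D : Set ℝ} (hD : Convex ℝ D) (hDo : IsOpen D)
    {f f' : ℝ → ℝ} (hf : ∀ x ∈ D, HasDerivAt f (f' x) x) (hf' : ∀ x ∈ D, 0 ≤ f' x) :
    MonotoneOn f D :=
  monotoneOn_of_hasDerivWithinAt_nonneg hD (HasDerivAt.continuousOn hf)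
    (by rw [hDo.interior_eq]; exact fun x hx => (hf x hx).hasDerivWithinAt)
    (by rwa [hDo.interior_eq])

theorem hasDerivAt_log_one_add_one_div {x : ℝ} (hx : x ≠ 0) (hx' : x + 1 ≠ 0) :
    HasDerivAt (fun y => log (1 + 1 / y)) (-(1 / (x * (x + 1)))) x := by
  have h1 : 1 + 1 / x ≠ 0 := by
    rw [one_add_div hx]; exact div_ne_zero hx' hx
  have := ((hasDerivAt_inv hx).const_add 1).log (by simpa using h1)
  simp only [one_div] at this ⊢
  convert this using 1
  field_simp

theorem log_one_add_one_div_pos {x : ℝ} (hx : 0 < x) : 0 < log (1 + 1 / x) :=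
  log_pos (lt_add_of_pos_right 1 (by positivity))

theorem one_div_add_one_le_log_one_add_one_div {x : ℝ} (hx : 0 < x) :
    1 / (x + 1) ≤ log (1 + 1 / x) := by
  have := one_sub_inv_le_log_of_pos (x := 1 + 1 / x) (by positivity)
  convert this using 1
  field_simp
  ring

theorem monotoneOn_sq_mul_log_one_add_one_div :
    MonotoneOn (fun x => (x * (x + 1)) ^ 2 * log (1 + 1 / x)) (Ioi 0) := by
  have hderiv : ∀ x ∈ Ioi (0 : ℝ), HasDerivAt (fun x => (x * (x + 1)) ^ 2 * log (1 + 1 / x))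
      (x * (x + 1) * (2 * (2 * x + 1) * log (1 + 1 / x) - 1)) x := by
    intro x (hx : 0 < x)
    have hpoly : HasDerivAt (fun x : ℝ => (x * (x + 1)) ^ 2)
        (2 * (x * (x + 1)) * (2 * x + 1)) x := by
      refine (((hasDerivAt_id' x).fun_mul ((hasDerivAt_id' x).add_const 1)).fun_pow 2).congr_deriv
        ?_
      push_cast
      ring
    refine (hpoly.fun_mul (hasDerivAt_log_one_add_one_div hx.ne' (by positivity))).congr_deriv ?_
    field_simp
    ring
  refine monotoneOn_of_hasDerivAt_nonneg (convex_Ioi 0) isOpen_Ioi hderiv fun x (hx : 0 < x) => ?_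
  have hlog : 1 ≤ 2 * (2 * x + 1) * log (1 + 1 / x) :=
    calc (1 : ℝ) ≤ 2 * (2 * x + 1) * (1 / (x + 1)) := by
          rw [mul_one_div, le_div_iff₀ (by positivity)]; linarith
      _ ≤ _ := by gcongr; exact one_div_add_one_le_log_one_add_one_div hx
  have : 0 ≤ 2 * (2 * x + 1) * log (1 + 1 / x) - 1 := by linarith
  positivity

theorem hasDerivAt_sqrt_log_one_add_one_div {x : ℝ} (hx : 0 < x) :
    HasDerivAt (fun y => √(log (1 + 1 / y)))
      (-(1 / (2 * (x * (x + 1)) * √(log (1 + 1 / x))))) x := by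
  refine ((hasDerivAt_log_one_add_one_div hx.ne' (by positivity)).sqrt
    (log_one_add_one_div_pos hx).ne').congr_deriv ?_
  field_simp

theorem sqrt_sq_mul_log_one_add_one_div {x : ℝ} (hx : 0 < x) :
    √((x * (x + 1)) ^ 2 * log (1 + 1 / x)) = x * (x + 1) * √(log (1 + 1 / x)) := by
  rw [sqrt_mul (by positivity), sqrt_sq (by positivity)]

theorem convexOn_sqrt_log_one_add_one_div :
    ConvexOn ℝ (Ioi 0) (fun x => √(log (1 + 1 / x))) := by
  refine MonotoneOn.convexOn_of_hasDerivAt (convex_Ioi 0) isOpen_Ioi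
    (fun x hx => hasDerivAt_sqrt_log_one_add_one_div hx) ?_
  intro a (ha : 0 < a) b (hb : 0 < b) hab
  have hsqrt := sqrt_le_sqrt (monotoneOn_sq_mul_log_one_add_one_div ha hb hab)
  rw [sqrt_sq_mul_log_one_add_one_div ha, sqrt_sq_mul_log_one_add_one_div hb] at hsqrt
  have := log_one_add_one_div_pos ha
  rw [neg_le_neg_iff]
  exact one_div_le_one_div_of_le (by positivity) (by linarith)

theorem log_one_add_one_div_add_le_sqrt_mul {t t0 : ℝ} (ht : 0 < t) (ht0 : 0 < t0) :
    log (1 + 1 / t0) + (t0 - t) / (2 * (t0 * (t0 + 1))) ≤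
      √(log (1 + 1 / t)) * √(log (1 + 1 / t0)) := by
  have hg0 := log_one_add_one_div_pos ht0
  have hs0 : 0 < √(log (1 + 1 / t0)) := sqrt_pos.2 hg0
  have htangent := convexOn_sqrt_log_one_add_one_div.add_deriv_mul_sub_le ht0 ht
    (hasDerivAt_sqrt_log_one_add_one_div ht0)
  have hscaled := mul_le_mul_of_nonneg_right htangent hs0.le
  refine (le_of_eq ?_).trans hscaled
  rw [add_mul, mul_self_sqrt hg0.le]
  generalize √(log (1 + 1 / t0)) = s at hs0 ⊢
  field_simp
  ring

theorem two_mul_mul_div_le_sq_div_add (a b : ℝ) {z c : ℝ} (hz : 0 < z) (hc : c ≠ 0) :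
    2 * a * b / c ≤ a ^ 2 / z + b ^ 2 / c ^ 2 * z := by
  have : 0 ≤ (a * c - b * z) ^ 2 / (z * c ^ 2) := by positivity
  rw [← sub_nonneg]
  convert this using 1
  field_simp
  ring

/-- Tangent-plane lower bound for `f(t,z) = ln(1 + 1/t)/z` at a positive reference
point `(t⁰, z⁰)`, with equality at the reference point. -/
theorem stmt_1 (t z t0 z0 : ℝ) (ht : 0 < t) (hz : 0 < z) (ht0 : 0 < t0) (hz0 : 0 < z0) :
    Real.log (1 + 1 / t) / z ≥
      2 * (Real.log (1 + 1 / t0) / z0) + 1 / (z0 * (t0 + 1))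
        - t / (z0 * t0 * (t0 + 1)) - (Real.log (1 + 1 / t0) / z0 / z0) * z ∧
    (t = t0 → z = z0 →
      Real.log (1 + 1 / t) / z =
        2 * (Real.log (1 + 1 / t0) / z0) + 1 / (z0 * (t0 + 1))
          - t / (z0 * t0 * (t0 + 1)) - (Real.log (1 + 1 / t0) / z0 / z0) * z) := by
  refine ⟨?_, fun htt hzz => ?_⟩
  · have hamgm := two_mul_mul_div_le_sq_div_add (√(log (1 + 1 / t))) (√(log (1 + 1 / t0)))
      hz hz0.ne'
    rw [sq_sqrt (log_one_add_one_div_pos ht).le, sq_sqrt (log_one_add_one_div_pos ht0).le] at hamgm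
    have hrhs : 2 * (log (1 + 1 / t0) / z0) + 1 / (z0 * (t0 + 1)) - t / (z0 * t0 * (t0 + 1))
          - log (1 + 1 / t0) / z0 / z0 * z =
        2 * (log (1 + 1 / t0) + (t0 - t) / (2 * (t0 * (t0 + 1)))) / z0
          - log (1 + 1 / t0) / z0 ^ 2 * z := by
      field_simp
      ring
    rw [ge_iff_le, hrhs]
    calc _ ≤ 2 * √(log (1 + 1 / t)) * √(log (1 + 1 / t0)) / z0
            - log (1 + 1 / t0) / z0 ^ 2 * z := by
          rw [mul_assoc 2]
          gcongr
          exact log_one_add_one_div_add_le_sqrt_mul ht ht0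
      _ ≤ log (1 + 1 / t) / z := by linarith
  · subst htt hzz
    field_simp
    ring
end

section
/- For all positive reals x, y, z and all positive reals x⁰, y⁰, z⁰, one has (1/z)·ln(1 + x²/y) ≥ 𝒜 − ℬ·(y/x²) − 𝒞·z, where 𝒜 = 2·ln(1 + (x⁰)²/y⁰)/z⁰ + ((x⁰)²/y⁰)/(z⁰·(1 + (x⁰)²/y⁰)), ℬ = ((x⁰)²/y⁰)²/(z⁰·(1 + (x⁰)²/y⁰)), and 𝒞 = ln(1 + (x⁰)²/y⁰)/(z⁰)². Moreover, equality holds at (x,y,z) = (x⁰,y⁰,z⁰). -/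
/-!
In the variable `u = y / x²` the right-hand side is the tangent plane at `(u⁰, z⁰)` of
`F (u, z) = g u / z` with `g u = log (1 + 1/u)`. Minimising `g u / z + g u⁰ · z / (z⁰)²` over `z`
(AM-GM) shows that `F` lies above this plane as soon as `√g` lies above its tangent line at `u⁰`,
and `√g` is convex on `(0, ∞)`: writing `(√g)' = -1 / (2 u (u + 1) √g)`, the function
`u (u + 1) √g` is increasing because `2 (2u + 1) g u ≥ 2 (2u + 1) / (u + 1) ≥ 1`.
-/

open Real Set

theorem ConvexOn.add_mul_sub_le_of_hasDerivAt {S : Set ℝ} {f : ℝ → ℝ} {x y f' : ℝ}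
    (hf : ConvexOn ℝ S f) (hx : x ∈ S) (hy : y ∈ S) (hd : HasDerivAt f f' x) :
    f x + f' * (y - x) ≤ f y := by
  rcases lt_trichotomy x y with hxy | rfl | hxy
  · have h := hf.le_slope_of_hasDerivAt hx hy hxy hd
    rw [slope_def_field, le_div_iff₀ (sub_pos.2 hxy)] at h
    linarith
  · simp
  · have h := hf.slope_le_of_hasDerivAt hy hx hxy hd
    rw [slope_def_field, div_le_iff₀ (sub_pos.2 hxy)] at h
    linarith

theorem two_mul_mul_div_le_sq_div_add_sq_mul_div_sq (a b : ℝ) {z z0 : ℝ} (hz : 0 < z)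
    (hz0 : 0 < z0) : 2 * a * b / z0 ≤ a ^ 2 / z + b ^ 2 * z / z0 ^ 2 := by
  rw [div_add_div _ _ hz.ne' (by positivity), div_le_div_iff₀ hz0 (by positivity)]
  nlinarith [sq_nonneg (a * z0 - b * z), mul_pos hz hz0]

theorem ConvexOn.tangent_le_div_of_sqrt {S : Set ℝ} {g : ℝ → ℝ} {g' u u0 z z0 : ℝ}
    (hg : ConvexOn ℝ S fun u => √(g u)) (hu : u ∈ S) (hu0 : u0 ∈ S) (hgu : 0 ≤ g u)
    (hgu0 : 0 < g u0) (hd : HasDerivAt g g' u0) (hz : 0 < z) (hz0 : 0 < z0) :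
    g u0 / z0 + g' / z0 * (u - u0) - g u0 / z0 ^ 2 * (z - z0) ≤ g u / z := by
  have htan := hg.add_mul_sub_le_of_hasDerivAt hu0 hu (hd.sqrt hgu0.ne')
  have hscaled : 2 * g u0 + g' * (u - u0) ≤ 2 * √(g u) * √(g u0) := by
    have h := mul_le_mul_of_nonneg_right htan (by positivity : 0 ≤ 2 * √(g u0))
    field_simp at h
    rw [sq_sqrt hgu0.le] at h
    linarith
  have hamgm := two_mul_mul_div_le_sq_div_add_sq_mul_div_sq (√(g u)) (√(g u0)) hz hz0
  rw [sq_sqrt hgu, sq_sqrt hgu0.le] at hamgm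
  have hlin := div_le_div_of_nonneg_right hscaled hz0.le
  calc g u0 / z0 + g' / z0 * (u - u0) - g u0 / z0 ^ 2 * (z - z0)
      = (2 * g u0 + g' * (u - u0)) / z0 - g u0 * z / z0 ^ 2 := by field_simp; ring
    _ ≤ g u / z := by linarith

theorem inv_add_one_le_log_one_add_inv {u : ℝ} (hu : 0 < u) : (u + 1)⁻¹ ≤ log (1 + u⁻¹) := by
  have h := one_sub_inv_le_log_of_pos (by positivity : 0 < 1 + u⁻¹)
  convert h using 1
  field_simp
  ring

theorem hasDerivAt_log_one_add_inv {u : ℝ} (hu : 0 < u) :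
    HasDerivAt (fun u => log (1 + u⁻¹)) (-(u * (u + 1))⁻¹) u := by
  have h := ((hasDerivAt_inv hu.ne').const_add 1).log (by positivity)
  convert h using 1
  field_simp

theorem log_one_add_inv_pos {u : ℝ} (hu : 0 < u) : 0 < log (1 + u⁻¹) :=
  log_pos (by simpa using hu)

theorem hasDerivAt_sqrt_log_one_add_inv {u : ℝ} (hu : 0 < u) :
    HasDerivAt (fun u => √(log (1 + u⁻¹)))
      (-(2 * (u * (u + 1) * √(log (1 + u⁻¹))))⁻¹) u :=
  ((hasDerivAt_log_one_add_inv hu).sqrt (log_one_add_inv_pos hu).ne').congr_deriv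
    (by field_simp)

theorem hasDerivAt_mul_sqrt_log_one_add_inv {u : ℝ} (hu : 0 < u) :
    HasDerivAt (fun u => u * (u + 1) * √(log (1 + u⁻¹)))
      ((2 * u + 1) * √(log (1 + u⁻¹)) - (2 * √(log (1 + u⁻¹)))⁻¹) u := by
  have hpoly : HasDerivAt (fun u : ℝ => u * (u + 1)) (2 * u + 1) u :=
    ((hasDerivAt_id' u).fun_mul ((hasDerivAt_id' u).add_const 1)).congr_deriv (by ring)
  refine (hpoly.fun_mul (hasDerivAt_sqrt_log_one_add_inv hu)).congr_deriv ?_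
  have := (sqrt_pos.2 (log_one_add_inv_pos hu)).ne'
  field_simp
  ring

theorem convexOn_sqrt_log_one_add_inv : ConvexOn ℝ (Ioi 0) fun u => √(log (1 + u⁻¹)) := by
  refine convexOn_of_hasDerivWithinAt2_nonneg (convex_Ioi 0)
    (f' := fun u => -(2 * (u * (u + 1) * √(log (1 + u⁻¹))))⁻¹)
    (f'' := fun u => 2 * ((2 * u + 1) * √(log (1 + u⁻¹)) - (2 * √(log (1 + u⁻¹)))⁻¹) /
      (2 * (u * (u + 1) * √(log (1 + u⁻¹)))) ^ 2) ?_ ?_ ?_ ?_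
  · exact fun u hu => (hasDerivAt_sqrt_log_one_add_inv hu).continuousAt.continuousWithinAt
  all_goals rw [interior_Ioi]
  · exact fun u hu => (hasDerivAt_sqrt_log_one_add_inv hu).hasDerivWithinAt
  · intro u (hu : 0 < u)
    have hpos : 0 < u * (u + 1) * √(log (1 + u⁻¹)) :=
      mul_pos (by positivity) (sqrt_pos.2 (log_one_add_inv_pos hu))
    refine ((((hasDerivAt_mul_sqrt_log_one_add_inv hu).const_mul 2).fun_inv
      (mul_pos two_pos hpos).ne').fun_neg.hasDerivWithinAt).congr_deriv ?_
    ring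
  · intro u (hu : 0 < u)
    have hg := inv_add_one_le_log_one_add_inv hu
    have hs := sqrt_pos.2 (log_one_add_inv_pos hu)
    have hkey : (2 * √(log (1 + u⁻¹)))⁻¹ ≤ (2 * u + 1) * √(log (1 + u⁻¹)) := by
      have hsq := mul_self_sqrt (log_one_add_inv_pos hu).le
      rw [inv_le_iff_one_le_mul₀ (by positivity)] at hg ⊢
      nlinarith
    exact div_nonneg (by linarith) (sq_nonneg _)

/-- Inequality (10) of the paper: surrogate lower bound of `(1/z)·ln(1 + x²/y)`
around the reference point `(x⁰, y⁰, z⁰)`, with equality at the reference point. -/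
theorem stmt_2 (x y z x0 y0 z0 A B C : ℝ)
    (hx : 0 < x) (hy : 0 < y) (hz : 0 < z)
    (hx0 : 0 < x0) (hy0 : 0 < y0) (hz0 : 0 < z0)
    (hA : A = 2 * Real.log (1 + x0 ^ 2 / y0) / z0
            + (x0 ^ 2 / y0) / (z0 * (1 + x0 ^ 2 / y0)))
    (hB : B = (x0 ^ 2 / y0) ^ 2 / (z0 * (1 + x0 ^ 2 / y0)))
    (hC : C = Real.log (1 + x0 ^ 2 / y0) / z0 ^ 2) :
    (1 / z) * Real.log (1 + x ^ 2 / y) ≥ A - B * (y / x ^ 2) - C * z ∧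
    (1 / z0) * Real.log (1 + x0 ^ 2 / y0) = A - B * (y0 / x0 ^ 2) - C * z0 := by
  have hu : y / x ^ 2 ∈ Ioi 0 := by simp only [mem_Ioi]; positivity
  have hu0 : 0 < y0 / x0 ^ 2 := by positivity
  have htan := convexOn_sqrt_log_one_add_inv.tangent_le_div_of_sqrt hu hu0
    (log_one_add_inv_pos hu).le (log_one_add_inv_pos hu0) (hasDerivAt_log_one_add_inv hu0) hz hz0
  simp only [inv_div] at htan
  set L0 := log (1 + x0 ^ 2 / y0)
  subst hA hB hC
  constructor
  · calc 2 * L0 / z0 + x0 ^ 2 / y0 / (z0 * (1 + x0 ^ 2 / y0))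
            - (x0 ^ 2 / y0) ^ 2 / (z0 * (1 + x0 ^ 2 / y0)) * (y / x ^ 2) - L0 / z0 ^ 2 * z
          = L0 / z0 + -(y0 / x0 ^ 2 * (y0 / x0 ^ 2 + 1))⁻¹ / z0 * (y / x ^ 2 - y0 / x0 ^ 2)
            - L0 / z0 ^ 2 * (z - z0) := by
          field_simp
          ring
      _ ≤ log (1 + x ^ 2 / y) / z := htan
      _ = 1 / z * log (1 + x ^ 2 / y) := by ring
  · field_simp
    ring
end
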